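/- The ideal 𝔟₄ = (x³, x²y, yz², z³, xyz, xy² − y³, y²z) of Q is minimally generated by 7 elements; equivalently, the k-vector space 𝔟₄/(𝔪_Q·𝔟₄) has dimension 7. -/

import Mathlib

/-!
The seven generators of `𝔟₄` are cubic forms whose coefficients at the monomials
`x³, x²y, yz², z³, xyz, xy², y²z` form the identity matrix (the `y³` in `xy² − y³` is not
among them). Reading off these seven coefficients is a `k`-linear map that kills `𝔪_Q 𝔟₄`,
whose elements have order at least `4`, so the images of the generators in `𝔟₄/𝔪_Q 𝔟₄` are
linearly independent. Conversely, writing `f = ∑ qᵢ gᵢ` and splitting each `qᵢ` into its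
constant term and an element of `𝔪_Q` shows that they span.
-/

noncomputable section

/-- The variable `x` in `Q = k[[x,y,z]]`. -/
def xx (k : Type*) [Field k] : MvPowerSeries (Fin 3) k := MvPowerSeries.X 0
/-- The variable `y` in `Q = k[[x,y,z]]`. -/
def yy (k : Type*) [Field k] : MvPowerSeries (Fin 3) k := MvPowerSeries.X 1
/-- The variable `z` in `Q = k[[x,y,z]]`. -/
def zz (k : Type*) [Field k] : MvPowerSeries (Fin 3) k := MvPowerSeries.X 2

/-- The ideal `b4` of the paper. -/
def Ib4 (k : Type*) [Field k] : Ideal (MvPowerSeries (Fin 3) k) :=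
  Ideal.span {xx k ^ 3, xx k ^ 2 * yy k, yy k * zz k ^ 2, zz k ^ 3, xx k * yy k * zz k, xx k * yy k ^ 2 - yy k ^ 3, yy k ^ 2 * zz k}

open MvPowerSeries Submodule

section Quotient

variable {K V ι : Type*} [DivisionRing K] [AddCommGroup V] [Module K V] [Fintype ι]

theorem finrank_map_mkQ_eq_card {M N : Submodule K V} {v : ι → V}
    (hM : M = span K (Set.range v) ⊔ N) (φ : V →ₗ[K] ι → K) (hN : N ≤ LinearMap.ker φ)
    (hv : LinearIndependent K (φ ∘ v)) :
    Module.finrank K (M.map N.mkQ) = Fintype.card ι := by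
  have hspan : M.map N.mkQ = span K (Set.range (N.mkQ ∘ v)) := by
    rw [hM, Submodule.map_sup, mkQ_map_self, sup_bot_eq, map_span, Set.range_comp]
  rw [hspan]
  exact finrank_span_eq_card (LinearIndependent.of_comp (N.liftQ φ hN) hv)

end Quotient

namespace MvPowerSeries

variable {σ R : Type*}

section CommSemiring

variable [CommSemiring R]

theorem le_order_of_mem_span {s : Set (MvPowerSeries σ R)} {n : ℕ∞} (hs : ∀ g ∈ s, n ≤ g.order)
    {f : MvPowerSeries σ R} (hf : f ∈ Ideal.span s) : n ≤ f.order := by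
  induction hf using Submodule.span_induction with
  | mem g hg => exact hs g hg
  | zero => simp
  | add f g _ _ hf hg => exact (le_min hf hg).trans min_order_le_add
  | smul a f _ hf => exact hf.trans (le_add_self.trans le_order_mul)

theorem succ_le_order_of_mem_span_X_mul {s : Set (MvPowerSeries σ R)} {n : ℕ}
    (hs : ∀ g ∈ s, n ≤ g.order) {f : MvPowerSeries σ R}
    (hf : f ∈ Ideal.span (Set.range X) * Ideal.span s) : n + 1 ≤ f.order := by
  rw [Ideal.span_mul_span'] at hf
  refine le_order_of_mem_span ?_ hf
  rintro _ ⟨_, ⟨i, rfl⟩, g, hg, rfl⟩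
  dsimp only
  have hX : 1 ≤ (X i : MvPowerSeries σ R).order :=
    one_le_order_iff_constCoeff_eq_zero.mpr (constantCoeff_X i)
  refine le_trans ?_ le_order_mul
  calc (n : ℕ∞) + 1 = 1 + n := add_comm _ _
    _ ≤ (X i).order + g.order := add_le_add hX (hs g hg)

theorem mem_span_range_X_of_constantCoeff_eq_zero [Fintype σ] {f : MvPowerSeries σ R}
    (hf : constantCoeff f = 0) : f ∈ Ideal.span (Set.range X) := by
  classical
  rcases isEmpty_or_nonempty σ with _ | _
  · have hf0 : f = 0 := by
      ext d
      rw [Subsingleton.elim d 0]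
      simpa using hf
    exact hf0 ▸ zero_mem _
  -- `c d` is a variable occurring in `d ≠ 0`; `g i` collects the terms `f_d X^d` with `c d = i`.
  let c : (σ →₀ ℕ) → σ := fun d => Classical.epsilon fun i => d i ≠ 0
  have hc : ∀ d : σ →₀ ℕ, d (c d) = 0 → d = 0 := fun d hd => by
    by_contra h
    obtain ⟨i, hi⟩ : ∃ i, d i ≠ 0 := by simpa [Finsupp.ext_iff] using h
    exact Classical.epsilon_spec (p := fun i => d i ≠ 0) ⟨i, hi⟩ hd
  let g : σ → MvPowerSeries σ R := fun i d => if c d = i then coeff d f else 0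
  have hg : ∀ i d, coeff d (g i) = if c d = i then coeff d f else 0 := fun _ _ => rfl
  have hsum : f = ∑ i, g i := by
    ext d
    simp [hg, map_sum]
  have hdvd : ∀ i, X i ∣ g i := fun i => X_dvd_iff.mpr fun d hd => by
    rw [hg]
    split_ifs with h
    · rw [hc d (h ▸ hd), coeff_zero_eq_constantCoeff_apply, hf]
    · rfl
  rw [hsum]
  refine Ideal.sum_mem _ fun i _ => ?_
  obtain ⟨h, hh⟩ := hdvd i
  exact hh ▸ Ideal.mul_mem_right _ _ (Ideal.subset_span ⟨i, rfl⟩)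

end CommSemiring

theorem restrictScalars_span_eq_span_sup_span_X_mul [CommRing R] [Fintype σ] {ι : Type*} [Fintype ι]
    (g : ι → MvPowerSeries σ R) :
    (Ideal.span (Set.range g)).restrictScalars R =
      span R (Set.range g) ⊔
        (Ideal.span (Set.range X) * Ideal.span (Set.range g)).restrictScalars R := by
  refine le_antisymm (fun f hf => ?_) (sup_le (span_le_restrictScalars R (MvPowerSeries σ R) _)
    (restrictScalars_mono R Ideal.mul_le_right))
  obtain ⟨q, rfl⟩ := (mem_span_range_iff_exists_fun _).mp hf
  have hsplit : ∑ i, q i • g i = ∑ i, constantCoeff (q i) • g i +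
      ∑ i, (q i - C (constantCoeff (q i))) * g i := by
    rw [← Finset.sum_add_distrib]
    refine Finset.sum_congr rfl fun i _ => ?_
    rw [smul_eq_C_mul, smul_eq_mul]
    ring
  rw [hsplit]
  refine add_mem_sup (sum_mem fun i _ => smul_mem _ _ (subset_span ⟨i, rfl⟩))
    (sum_mem fun i _ => Ideal.mul_mem_mul ?_ (Ideal.subset_span ⟨i, rfl⟩))
  exact mem_span_range_X_of_constantCoeff_eq_zero (by simp)

end MvPowerSeries

section Monomials

variable (k : Type*) [Field k]

def xyzExp (a b c : ℕ) : Fin 3 →₀ ℕ :=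
  Finsupp.single 0 a + Finsupp.single 1 b + Finsupp.single 2 c

def xyzMonomial (a b c : ℕ) : MvPowerSeries (Fin 3) k := xx k ^ a * yy k ^ b * zz k ^ c

theorem xyzMonomial_eq_monomial (a b c : ℕ) :
    xyzMonomial k a b c = monomial (xyzExp a b c) 1 := by
  simp only [xyzMonomial, xx, yy, zz, X_pow_eq, monomial_mul_monomial, one_mul, xyzExp]

theorem coeff_xyzExp_xyzMonomial (a b c p q r : ℕ) :
    coeff (xyzExp a b c) (xyzMonomial k p q r) = if a = p ∧ b = q ∧ c = r then 1 else 0 := by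
  classical
  rw [xyzMonomial_eq_monomial, coeff_monomial]
  simp [xyzExp, Finsupp.ext_iff, Fin.forall_fin_succ]

theorem order_xyzMonomial (a b c : ℕ) : (xyzMonomial k a b c).order = (a + b + c : ℕ) := by
  rw [xyzMonomial_eq_monomial, order_monomial_of_ne_zero one_ne_zero, Finsupp.degree_eq_sum]
  simp [xyzExp, Fin.sum_univ_three]

theorem span_xx_yy_zz_eq_span_range_X :
    Ideal.span {xx k, yy k, zz k} = Ideal.span (Set.range X) := by
  congr 1
  ext f
  simp [xx, yy, zz, Fin.exists_fin_succ, eq_comm]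

end Monomials

namespace Ib4

variable (k : Type*) [Field k]

def gen : Fin 7 → MvPowerSeries (Fin 3) k :=
  ![xyzMonomial k 3 0 0, xyzMonomial k 2 1 0, xyzMonomial k 0 1 2, xyzMonomial k 0 0 3,
    xyzMonomial k 1 1 1, xyzMonomial k 1 2 0 - xyzMonomial k 0 3 0, xyzMonomial k 0 2 1]

theorem eq_span_range_gen : Ib4 k = Ideal.span (Set.range (gen k)) := by
  simp only [Ib4, gen, xyzMonomial, Matrix.range_cons, Matrix.range_empty, Set.union_empty,
    Set.singleton_union, pow_zero, pow_one, mul_one, one_mul]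

theorem three_le_order_gen (j : Fin 7) : 3 ≤ (gen k j).order := by
  have hmono : ∀ a b c, a + b + c = 3 → 3 ≤ (xyzMonomial k a b c).order := fun a b c h => by
    rw [order_xyzMonomial, h]; rfl
  have hsub : 3 ≤ (xyzMonomial k 1 2 0 - xyzMonomial k 0 3 0).order := by
    rw [sub_eq_add_neg]
    refine (le_min (hmono 1 2 0 rfl) ?_).trans min_order_le_add
    rw [order_neg]
    exact hmono 0 3 0 rfl
  fin_cases j <;> first | exact hmono _ _ _ rfl | exact hsub

def leadingExp : Fin 7 → Fin 3 →₀ ℕ :=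
  ![xyzExp 3 0 0, xyzExp 2 1 0, xyzExp 0 1 2, xyzExp 0 0 3, xyzExp 1 1 1, xyzExp 1 2 0,
    xyzExp 0 2 1]

theorem degree_leadingExp (i : Fin 7) : (leadingExp i).degree = 3 := by
  fin_cases i <;> simp [leadingExp, xyzExp, Finsupp.degree_eq_sum, Fin.sum_univ_three]

def leadingCoeffs : MvPowerSeries (Fin 3) k →ₗ[k] Fin 7 → k :=
  LinearMap.pi fun i => coeff (leadingExp i)

theorem leadingCoeffs_gen (j : Fin 7) : leadingCoeffs k (gen k j) = Pi.single j 1 := by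
  ext i
  fin_cases i <;> fin_cases j <;> simp [leadingCoeffs, leadingExp, gen, coeff_xyzExp_xyzMonomial]

theorem leadingCoeffs_eq_zero_of_four_le_order {f : MvPowerSeries (Fin 3) k} (hf : 4 ≤ f.order) :
    leadingCoeffs k f = 0 := by
  ext i
  refine coeff_of_lt_order (lt_of_lt_of_le ?_ hf)
  rw [degree_leadingExp]
  norm_num

end Ib4

theorem mu_b4 (k : Type*) [Field k] :
    Module.finrank k
      (Submodule.map
        (Submodule.restrictScalars k (Ideal.span {xx k, yy k, zz k} * Ib4 k)).mkQ
        (Submodule.restrictScalars k (Ib4 k))) = 7 := by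
  rw [span_xx_yy_zz_eq_span_range_X, Ib4.eq_span_range_gen]
  have hN : (Ideal.span (Set.range X) * Ideal.span (Set.range (Ib4.gen k))).restrictScalars k ≤
      LinearMap.ker (Ib4.leadingCoeffs k) := fun f hf =>
    Ib4.leadingCoeffs_eq_zero_of_four_le_order k <| succ_le_order_of_mem_span_X_mul (n := 3)
      (by rintro _ ⟨j, rfl⟩; exact Ib4.three_le_order_gen k j) hf
  have hindep : LinearIndependent k (Ib4.leadingCoeffs k ∘ Ib4.gen k) := by
    convert (Pi.basisFun k (Fin 7)).linearIndependent
    ext j : 1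
    rw [Function.comp_apply, Ib4.leadingCoeffs_gen, Pi.basisFun_apply]
  rw [finrank_map_mkQ_eq_card (restrictScalars_span_eq_span_sup_span_X_mul (Ib4.gen k))
    (Ib4.leadingCoeffs k) hN hindep, Fintype.card_fin]
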